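/- arXiv:1109.4298 — 3 statements merged into one kernel-verified Lean document; each statement's English description precedes it below -/
import Mathlib

section
/- Euclid I.5, second part: if ABC is an isosceles triangle with dist A B = dist A C, and points D, E lie on rays from A through B and from A through C respectively, strictly beyond B and C (i.e., B strictly between A and D, and C strictly between A and E), then the angles under the base are equal: ∠ D B C = ∠ E C B. -/
open EuclideanGeometry Real

theorem Sbtw.angle_eq_pi_sub_angle {V P : Type*} [NormedAddCommGroup V] [InnerProductSpace ℝ V]
    [MetricSpace P] [NormedAddTorsor V P] {A B D : P} (hABD : Sbtw ℝ A B D) (C : P) :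
    ∠ D B C = π - ∠ A B C := by
  have hsupp := angle_add_angle_eq_pi_of_angle_eq_pi C hABD.angle₁₂₃_eq_pi
  rw [angle_comm C B A, angle_comm C B D] at hsupp
  linarith

theorem isosceles_angles_under_base_general (A B C D E : EuclideanSpace ℝ (Fin 2))
    (hiso : dist A B = dist A C)
    (hD : Sbtw ℝ A B D) (hE : Sbtw ℝ A C E) :
    ∠ D B C = ∠ E C B := by
  rw [hD.angle_eq_pi_sub_angle, hE.angle_eq_pi_sub_angle, angle_eq_angle_of_dist_eq hiso]

theorem isosceles_angles_under_base (A B C D E : EuclideanSpace ℝ (Fin 2))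
    (h : AffineIndependent ℝ ![A, B, C]) (hiso : dist A B = dist A C)
    (hD : Sbtw ℝ A B D) (hE : Sbtw ℝ A C E) :
    ∠ D B C = ∠ E C B :=
  isosceles_angles_under_base_general A B C D E hiso hD hE
end

section
/- The two circles in Euclid I.1 intersect: for distinct points A, B in the plane, the spheres (circles) of radius dist A B centered at A and at B have nonempty intersection, and in fact intersect in exactly two points. -/
open Module Metric RealInnerProductSpace

lemma exists_ne_zero_inner_eq_zero {𝕜 E : Type*} [RCLike 𝕜] [NormedAddCommGroup E]
    [InnerProductSpace 𝕜 E] (h : 2 ≤ finrank 𝕜 E) (v : E) : ∃ w ≠ 0, inner 𝕜 w v = 0 := by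
  have : FiniteDimensional 𝕜 E := Module.finite_of_finrank_pos (by omega)
  have hK : 0 < finrank 𝕜 (𝕜 ∙ v)ᗮ := by
    have := (𝕜 ∙ v).finrank_add_finrank_orthogonal
    have : finrank 𝕜 (𝕜 ∙ v) ≤ 1 := by simpa using finrank_span_le_card (R := 𝕜) ({v} : Set E)
    omega
  obtain ⟨⟨w, hwK⟩, hw0⟩ := Module.finrank_pos_iff_exists_ne_zero.mp hK
  exact ⟨w, by simpa using hw0, Submodule.mem_orthogonal_singleton_iff_inner_left.mp hwK⟩

section Apex

variable {V P : Type*} [NormedAddCommGroup V] [InnerProductSpace ℝ V] [MetricSpace P]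
  [NormedAddTorsor V P] {A B : P} {w : V}

lemma dist_vadd_midpoint_left_sq (h : ⟪w, B -ᵥ A⟫ = 0) :
    dist (w +ᵥ midpoint ℝ A B) A ^ 2 = ‖w‖ ^ 2 + (dist A B / 2) ^ 2 := by
  rw [dist_eq_norm_vsub V, vadd_vsub_assoc, midpoint_vsub_left, norm_add_sq_real,
    inner_smul_right, h, norm_smul, dist_comm, dist_eq_norm_vsub V]
  norm_num
  ring

lemma dist_vadd_midpoint_right_sq (h : ⟪w, B -ᵥ A⟫ = 0) :
    dist (w +ᵥ midpoint ℝ A B) B ^ 2 = ‖w‖ ^ 2 + (dist A B / 2) ^ 2 := by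
  have h' : ⟪w, A -ᵥ B⟫ = 0 := by rw [← neg_vsub_eq_vsub_rev, inner_neg_right, h, neg_zero]
  rw [midpoint_comm, dist_vadd_midpoint_left_sq h', dist_comm]

lemma vadd_midpoint_mem_sphere_inter_sphere (h : ⟪w, B -ᵥ A⟫ = 0)
    (hw : ‖w‖ = √3 / 2 * dist A B) :
    w +ᵥ midpoint ℝ A B ∈ sphere A (dist A B) ∩ sphere B (dist A B) := by
  have key : ‖w‖ ^ 2 + (dist A B / 2) ^ 2 = dist A B ^ 2 := by
    rw [hw, mul_pow, div_pow, Real.sq_sqrt (by norm_num)]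
    ring
  refine ⟨?_, ?_⟩ <;> rw [mem_sphere] <;>
    refine (pow_left_inj₀ dist_nonneg dist_nonneg two_ne_zero).mp ?_
  · rw [dist_vadd_midpoint_left_sq h, key]
  · rw [dist_vadd_midpoint_right_sq h, key]

/-- Two circles of radius `dist A B` about `A` and `B` meet in the apexes `M ± w` of the two
equilateral triangles on `AB`, where `M` is the midpoint and `w ⊥ AB` has length `√3 / 2 * |AB|`. -/
lemma ncard_sphere_inter_sphere_dist_eq_two (hd : finrank ℝ V = 2) (hAB : A ≠ B) :
    (sphere A (dist A B) ∩ sphere B (dist A B)).ncard = 2 := by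
  have : FiniteDimensional ℝ V := Module.finite_of_finrank_pos (by omega)
  obtain ⟨u, hu0, hu⟩ := exists_ne_zero_inner_eq_zero hd.ge (B -ᵥ A)
  set w := (√3 / 2 * dist A B / ‖u‖) • u
  have hw : ‖w‖ = √3 / 2 * dist A B := by
    rw [norm_smul, Real.norm_of_nonneg (by positivity), div_mul_cancel₀ _ (norm_ne_zero_iff.mpr hu0)]
  have hw0 : w ≠ 0 := by
    rw [← norm_ne_zero_iff, hw]
    have := dist_pos.mpr hAB
    positivity
  have hP := vadd_midpoint_mem_sphere_inter_sphere (by rw [inner_smul_left, hu, mul_zero]) hw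
  have hQ := vadd_midpoint_mem_sphere_inter_sphere (w := -w)
    (by rw [inner_neg_left, inner_smul_left, hu, mul_zero, neg_zero]) (by rw [norm_neg, hw])
  have hPQ : w +ᵥ midpoint ℝ A B ≠ -w +ᵥ midpoint ℝ A B := by
    rw [Ne, vadd_right_cancel_iff, eq_neg_iff_add_eq_zero, ← two_smul ℝ, smul_eq_zero]
    simp [hw0]
  have hpair : sphere A (dist A B) ∩ sphere B (dist A B) =
      {w +ᵥ midpoint ℝ A B, -w +ᵥ midpoint ℝ A B} := by
    refine subset_antisymm (fun X hX => ?_) (Set.insert_subset hP (Set.singleton_subset_iff.mpr hQ))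
    exact EuclideanGeometry.eq_of_dist_eq_of_dist_eq_of_finrank_eq_two hd hAB hPQ
      hP.1 hQ.1 hX.1 hP.2 hQ.2 hX.2
  rw [hpair, Set.ncard_pair hPQ]

end Apex

theorem circles_intersect_in_two_points (A B : EuclideanSpace ℝ (Fin 2)) (hAB : A ≠ B) :
    (Metric.sphere A (dist A B) ∩ Metric.sphere B (dist A B)).Nonempty ∧
    (Metric.sphere A (dist A B) ∩ Metric.sphere B (dist A B)).ncard = 2 := by
  have h := ncard_sphere_inter_sphere_dist_eq_two finrank_euclideanSpace_fin hAB
  exact ⟨Set.nonempty_of_ncard_ne_zero (by rw [h]; exact two_ne_zero), h⟩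
end

section
/- In Euclid I.5 with the notation of its proof: if A, B, C are affinely independent with dist A B = dist A C, F is a point with B strictly between A and F, and G is on segment from A beyond C with C strictly between A and G and dist A F = dist A G, then dist F C = dist G B. -/
open EuclideanGeometry

theorem euclid_I5_first_sas_general (A B C F G : EuclideanSpace ℝ (Fin 2))
    (hiso : dist A B = dist A C)
    (hF : Sbtw ℝ A B F) (hG : Sbtw ℝ A C G) (hFG : dist A F = dist A G) :
    dist F C = dist G B := by
  have hangle : ∠ F A C = ∠ G A B := by
    rw [← hF.angle_eq_left, hG.angle_eq_right, angle_comm]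
  have hcong : Congruent ![F, A, C] ![G, A, B] :=
    side_angle_side hangle (by rw [dist_comm, hFG, dist_comm]) hiso.symm
  exact hcong.dist_eq 0 2

theorem euclid_I5_first_sas (A B C F G : EuclideanSpace ℝ (Fin 2))
    (h : AffineIndependent ℝ ![A, B, C]) (hiso : dist A B = dist A C)
    (hF : Sbtw ℝ A B F) (hG : Sbtw ℝ A C G) (hFG : dist A F = dist A G) :
    dist F C = dist G B :=
  euclid_I5_first_sas_general A B C F G hiso hF hG hFG
end
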